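/- Let n ≥ 1 and define G : {(θ, λ) ∈ ℝ^{n−1} × ℝ : λ ≠ 0} → S^n by G(θ,λ) = ( 1/2 − |θ|²/4 − λ²/2, θ/√2, −1/2 − |θ|²/4 − λ²/2 ) / √( 1/2 + |θ|²/2 + 2(|θ|²/4 + λ²/2)² ), where S^n is the unit sphere in ℝ^{n+1}. Then G takes values in S^n, G is a local diffeomorphism at every point of its domain, and G is injective on {(θ,λ) : λ > 0}. -/

import Mathlib

open MeasureTheory Real Metric Set
open scoped RealInnerProductSpace ENNReal NNReal

noncomputable section

/-- The map `G(θ, λ)`, on `ℝ^{n+1}` written as `ℝ × ℝ^{n-1} × ℝ`. -/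
def sphereG {m : ℕ} (p : EuclideanSpace ℝ (Fin m) × ℝ) :
    ℝ × EuclideanSpace ℝ (Fin m) × ℝ :=
  (Real.sqrt (1 / 2 + ‖p.1‖ ^ 2 / 2 + 2 * (‖p.1‖ ^ 2 / 4 + p.2 ^ 2 / 2) ^ 2))⁻¹ •
    (1 / 2 - ‖p.1‖ ^ 2 / 4 - p.2 ^ 2 / 2,
      (Real.sqrt 2)⁻¹ • p.1,
      -(1 / 2) - ‖p.1‖ ^ 2 / 4 - p.2 ^ 2 / 2)

/-- Membership in the unit sphere `Sⁿ` of `ℝ^{n+1} = ℝ × ℝ^{n-1} × ℝ`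
(Euclidean norm one). -/
def onSphere {m : ℕ} (q : ℝ × EuclideanSpace ℝ (Fin m) × ℝ) : Prop :=
  q.1 ^ 2 + ‖q.2.1‖ ^ 2 + q.2.2 ^ 2 = 1

namespace SphereGAux

variable {m : ℕ}

local notation "E" => EuclideanSpace ℝ (Fin m)

lemma arg_pos (p : E × ℝ) :
    (0:ℝ) < 1 / 2 + ‖p.1‖ ^ 2 / 2 + 2 * (‖p.1‖ ^ 2 / 4 + p.2 ^ 2 / 2) ^ 2 := by positivity

lemma sqrt2_pos : (0:ℝ) < Real.sqrt 2 := Real.sqrt_pos.2 (by norm_num)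

lemma sq_sqrt2 : Real.sqrt 2 ^ 2 = 2 := Real.sq_sqrt (by norm_num)

lemma sphereG_fst (p : E × ℝ) :
    (sphereG p).1 = (Real.sqrt (1 / 2 + ‖p.1‖ ^ 2 / 2 +
      2 * (‖p.1‖ ^ 2 / 4 + p.2 ^ 2 / 2) ^ 2))⁻¹ * (1 / 2 - ‖p.1‖ ^ 2 / 4 - p.2 ^ 2 / 2) := rfl

lemma sphereG_snd_fst (p : E × ℝ) :
    (sphereG p).2.1 = (Real.sqrt (1 / 2 + ‖p.1‖ ^ 2 / 2 +
      2 * (‖p.1‖ ^ 2 / 4 + p.2 ^ 2 / 2) ^ 2))⁻¹ • (Real.sqrt 2)⁻¹ • p.1 := rfl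

lemma sphereG_snd_snd (p : E × ℝ) :
    (sphereG p).2.2 = (Real.sqrt (1 / 2 + ‖p.1‖ ^ 2 / 2 +
      2 * (‖p.1‖ ^ 2 / 4 + p.2 ^ 2 / 2) ^ 2))⁻¹ * (-(1 / 2) - ‖p.1‖ ^ 2 / 4 - p.2 ^ 2 / 2) := rfl

lemma norm_sq_snd_fst (p : E × ℝ) :
    ‖(sphereG p).2.1‖ ^ 2 = ((Real.sqrt (1 / 2 + ‖p.1‖ ^ 2 / 2 +
      2 * (‖p.1‖ ^ 2 / 4 + p.2 ^ 2 / 2) ^ 2))⁻¹) ^ 2 * (2⁻¹ * ‖p.1‖ ^ 2) := by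
  have h2 : ((Real.sqrt 2)⁻¹) ^ 2 = 2⁻¹ := by
    rw [inv_pow, Real.sq_sqrt]; norm_num
  rw [sphereG_snd_fst, norm_smul, norm_smul, Real.norm_eq_abs, Real.norm_eq_abs,
    abs_of_nonneg (by positivity), abs_of_nonneg (by positivity), mul_pow, mul_pow, h2]

lemma key_onSphere (p : E × ℝ) : onSphere (sphereG p) := by
  have harg := arg_pos p
  unfold onSphere
  rw [sphereG_fst, sphereG_snd_snd, norm_sq_snd_fst]
  set r := Real.sqrt (1 / 2 + ‖p.1‖ ^ 2 / 2 + 2 * (‖p.1‖ ^ 2 / 4 + p.2 ^ 2 / 2) ^ 2) with hr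
  have hr2 : r ^ 2 = 1 / 2 + ‖p.1‖ ^ 2 / 2 + 2 * (‖p.1‖ ^ 2 / 4 + p.2 ^ 2 / 2) ^ 2 :=
    Real.sq_sqrt harg.le
  have hrne : r ≠ 0 := (Real.sqrt_pos.2 harg).ne'
  calc (r⁻¹ * (1 / 2 - ‖p.1‖ ^ 2 / 4 - p.2 ^ 2 / 2)) ^ 2 + r⁻¹ ^ 2 * (2⁻¹ * ‖p.1‖ ^ 2)
        + (r⁻¹ * (-(1 / 2) - ‖p.1‖ ^ 2 / 4 - p.2 ^ 2 / 2)) ^ 2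
      = r⁻¹ ^ 2 * (1 / 2 + ‖p.1‖ ^ 2 / 2 + 2 * (‖p.1‖ ^ 2 / 4 + p.2 ^ 2 / 2) ^ 2) := by ring
    _ = r⁻¹ ^ 2 * r ^ 2 := by rw [hr2]
    _ = 1 := by field_simp


lemma sphereG_contDiff : ContDiff ℝ (⊤ : ℕ∞) (sphereG (m := m)) := by
  have h1 : ContDiff ℝ (⊤ : ℕ∞) (fun p : E × ℝ => ‖p.1‖ ^ 2) :=
    (contDiff_norm_sq ℝ).comp contDiff_fst
  have h2 : ContDiff ℝ (⊤ : ℕ∞) (fun p : E × ℝ => p.2 ^ 2) := contDiff_snd.pow 2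
  have harg : ContDiff ℝ (⊤ : ℕ∞) (fun p : E × ℝ =>
      1 / 2 + ‖p.1‖ ^ 2 / 2 + 2 * (‖p.1‖ ^ 2 / 4 + p.2 ^ 2 / 2) ^ 2) := by
    exact (contDiff_const.add (h1.div_const 2)).add
      (contDiff_const.mul (((h1.div_const 4).add (h2.div_const 2)).pow 2))
  have hsc : ContDiff ℝ (⊤ : ℕ∞) (fun p : E × ℝ =>
      (Real.sqrt (1 / 2 + ‖p.1‖ ^ 2 / 2 + 2 * (‖p.1‖ ^ 2 / 4 + p.2 ^ 2 / 2) ^ 2))⁻¹ ) := by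
    refine ContDiff.inv (harg.sqrt fun p => (arg_pos p).ne') fun p => ?_
    exact (Real.sqrt_pos.2 (arg_pos p)).ne'
  refine hsc.smul (ContDiff.prodMk ?_ (ContDiff.prodMk ?_ ?_))
  · exact (contDiff_const.sub (h1.div_const 4)).sub (h2.div_const 2)
  · exact contDiff_fst.const_smul _
  · exact (contDiff_const.sub (h1.div_const 4)).sub (h2.div_const 2)

/-- Candidate local inverse, with a sign `ε`. -/
def sphereH (ε : ℝ) (q : ℝ × E × ℝ) : E × ℝ :=
  ((Real.sqrt 2 / (q.1 - q.2.2)) • q.2.1,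
    ε * Real.sqrt (-(q.1 + q.2.2) * (q.1 - q.2.2) - ‖q.2.1‖ ^ 2) / (q.1 - q.2.2))

/-- The open set in the ambient space. -/
def sphereV (m : ℕ) : Set (ℝ × EuclideanSpace ℝ (Fin m) × ℝ) :=
  {q | 0 < q.1 - q.2.2 ∧ 0 < -(q.1 + q.2.2) * (q.1 - q.2.2) - ‖q.2.1‖ ^ 2}

lemma isOpen_sphereV : IsOpen (sphereV m) := by
  have hc1 : Continuous fun q : ℝ × E × ℝ => q.1 - q.2.2 := by fun_prop
  have hc2 : Continuous fun q : ℝ × E × ℝ =>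
      -(q.1 + q.2.2) * (q.1 - q.2.2) - ‖q.2.1‖ ^ 2 := by fun_prop
  exact (isOpen_lt continuous_const hc1).inter (isOpen_lt continuous_const hc2)

lemma sphereH_contDiffOn (ε : ℝ) : ContDiffOn ℝ (⊤ : ℕ∞) (sphereH (m := m) ε) (sphereV m) := by
  have h1 : ContDiff ℝ (⊤ : ℕ∞) (fun q : ℝ × E × ℝ => q.1 - q.2.2) :=
    contDiff_fst.sub contDiff_snd.snd
  have hnum : ContDiff ℝ (⊤ : ℕ∞) (fun q : ℝ × E × ℝ =>
      -(q.1 + q.2.2) * (q.1 - q.2.2) - ‖q.2.1‖ ^ 2) :=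
    ((contDiff_fst.add contDiff_snd.snd).neg.mul h1).sub
      ((contDiff_norm_sq ℝ).comp contDiff_snd.fst)
  have hd : ∀ q ∈ sphereV m, q.1 - q.2.2 ≠ 0 := fun q hq => hq.1.ne'
  refine ContDiffOn.prodMk ?_ ?_
  · exact (contDiffOn_const.div h1.contDiffOn hd).smul contDiff_snd.fst.contDiffOn
  · refine ContDiffOn.div (contDiffOn_const.mul ?_) h1.contDiffOn hd
    exact hnum.contDiffOn.sqrt fun q hq => hq.2.ne'

lemma diff_fst_snd (p : E × ℝ) :
    (sphereG p).1 - (sphereG p).2.2 = (Real.sqrt (1 / 2 + ‖p.1‖ ^ 2 / 2 +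
      2 * (‖p.1‖ ^ 2 / 4 + p.2 ^ 2 / 2) ^ 2))⁻¹ := by
  rw [sphereG_fst, sphereG_snd_snd]; ring

lemma num_eq (p : E × ℝ) :
    -((sphereG p).1 + (sphereG p).2.2) * ((sphereG p).1 - (sphereG p).2.2)
      - ‖(sphereG p).2.1‖ ^ 2 = ((Real.sqrt (1 / 2 + ‖p.1‖ ^ 2 / 2 +
        2 * (‖p.1‖ ^ 2 / 4 + p.2 ^ 2 / 2) ^ 2))⁻¹ * p.2) ^ 2 := by
  rw [sphereG_fst, sphereG_snd_snd, norm_sq_snd_fst]; ring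

lemma sphereG_mem_V (p : E × ℝ) (hp : p.2 ≠ 0) : sphereG p ∈ sphereV m := by
  have h1 := diff_fst_snd p
  have h2 := num_eq p
  have hrp : 0 < (Real.sqrt (1 / 2 + ‖p.1‖ ^ 2 / 2 +
      2 * (‖p.1‖ ^ 2 / 4 + p.2 ^ 2 / 2) ^ 2))⁻¹ := by
    exact inv_pos.2 (Real.sqrt_pos.2 (arg_pos p))
  constructor
  · rw [h1]; exact hrp
  · rw [h2]; positivity

lemma sphereH_sphereG {ε : ℝ} (hε : ε = 1 ∨ ε = -1) (p : E × ℝ) (hp : 0 < ε * p.2) :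
    sphereH ε (sphereG p) = p := by
  have harg := arg_pos p
  have hrpos : 0 < Real.sqrt (1 / 2 + ‖p.1‖ ^ 2 / 2 +
      2 * (‖p.1‖ ^ 2 / 4 + p.2 ^ 2 / 2) ^ 2) := Real.sqrt_pos.2 harg
  set r := Real.sqrt (1 / 2 + ‖p.1‖ ^ 2 / 2 + 2 * (‖p.1‖ ^ 2 / 4 + p.2 ^ 2 / 2) ^ 2) with hr
  have hinv : (0:ℝ) < r⁻¹ := inv_pos.2 hrpos
  have hsqrtnum : Real.sqrt (-((sphereG p).1 + (sphereG p).2.2) *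
      ((sphereG p).1 - (sphereG p).2.2) - ‖(sphereG p).2.1‖ ^ 2) = r⁻¹ * |p.2| := by
    rw [num_eq p, Real.sqrt_sq_eq_abs, abs_mul, abs_of_pos hinv]
  have habs : ε * |p.2| = p.2 := by
    rcases hε with rfl | rfl
    · rw [one_mul]; rw [one_mul] at hp; exact abs_of_pos hp
    · rw [neg_one_mul] at hp ⊢
      rw [abs_of_neg (by linarith), neg_neg]
  unfold sphereH
  rw [hsqrtnum, diff_fst_snd p, sphereG_snd_fst]
  refine Prod.ext ?_ ?_
  · show (Real.sqrt 2 / r⁻¹) • r⁻¹ • (Real.sqrt 2)⁻¹ • p.1 = p.1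
    rw [smul_smul, smul_smul]
    have : Real.sqrt 2 / r⁻¹ * r⁻¹ * (Real.sqrt 2)⁻¹ = 1 := by
      field_simp
    rw [this, one_smul]
  · show ε * (r⁻¹ * |p.2|) / r⁻¹ = p.2
    rw [mul_comm r⁻¹ |p.2|, mul_div_assoc, mul_div_assoc, div_self hinv.ne', mul_one, habs]

lemma sphereG_sphereH {ε : ℝ} (hε : ε = 1 ∨ ε = -1) (q : ℝ × E × ℝ)
    (hq : q ∈ sphereV m) (hs : onSphere q) : sphereG (sphereH ε q) = q := by
  obtain ⟨a, u, c⟩ := q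
  obtain ⟨hd, hnum⟩ := hq
  simp only at hd hnum
  have hs' : a ^ 2 + ‖u‖ ^ 2 + c ^ 2 = 1 := hs
  have hdne : a - c ≠ 0 := hd.ne'
  have h2 : (Real.sqrt 2) ^ 2 = 2 := Real.sq_sqrt (by norm_num)
  have hθ2 : ‖(Real.sqrt 2 / (a - c)) • u‖ ^ 2 = 2 * ‖u‖ ^ 2 / (a - c) ^ 2 := by
    rw [norm_smul, Real.norm_eq_abs, abs_of_pos (by positivity), mul_pow, div_pow, h2]
    ring
  have hε2 : ε ^ 2 = 1 := by rcases hε with rfl | rfl <;> norm_num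
  have hl2 : (ε * Real.sqrt (-(a + c) * (a - c) - ‖u‖ ^ 2) / (a - c)) ^ 2
      = (-(a + c) * (a - c) - ‖u‖ ^ 2) / (a - c) ^ 2 := by
    rw [div_pow, mul_pow, hε2, Real.sq_sqrt hnum.le, one_mul]
  have hu2 : ‖u‖ ^ 2 = 1 - a ^ 2 - c ^ 2 := by linarith
  have harg : 1 / 2 + ‖(Real.sqrt 2 / (a - c)) • u‖ ^ 2 / 2 +
      2 * (‖(Real.sqrt 2 / (a - c)) • u‖ ^ 2 / 4
        + (ε * Real.sqrt (-(a + c) * (a - c) - ‖u‖ ^ 2) / (a - c)) ^ 2 / 2) ^ 2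
      = ((a - c) ^ 2)⁻¹ := by
    rw [hθ2, hl2, hu2]
    field_simp
    ring
  have hrr : Real.sqrt (1 / 2 + ‖(Real.sqrt 2 / (a - c)) • u‖ ^ 2 / 2 +
      2 * (‖(Real.sqrt 2 / (a - c)) • u‖ ^ 2 / 4
        + (ε * Real.sqrt (-(a + c) * (a - c) - ‖u‖ ^ 2) / (a - c)) ^ 2 / 2) ^ 2)
      = (a - c)⁻¹ := by
    rw [harg, Real.sqrt_inv, Real.sqrt_sq hd.le]
  show sphereG ((Real.sqrt 2 / (a - c)) • u,
      ε * Real.sqrt (-(a + c) * (a - c) - ‖u‖ ^ 2) / (a - c)) = (a, u, c)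
  unfold sphereG
  simp only [hrr, inv_inv, Prod.smul_fst, Prod.smul_snd, smul_eq_mul]
  refine Prod.ext ?_ (Prod.ext ?_ ?_)
  · show (a - c) * (1 / 2 - ‖(Real.sqrt 2 / (a - c)) • u‖ ^ 2 / 4
        - (ε * Real.sqrt (-(a + c) * (a - c) - ‖u‖ ^ 2) / (a - c)) ^ 2 / 2) = a
    rw [hθ2, hl2]
    field_simp
    ring
  · show (a - c) • (Real.sqrt 2)⁻¹ • (Real.sqrt 2 / (a - c)) • u = u
    rw [smul_smul, smul_smul]
    have : (a - c) * (Real.sqrt 2)⁻¹ * (Real.sqrt 2 / (a - c)) = 1 := by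
      field_simp
    rw [this, one_smul]
  · show (a - c) * (-(1 / 2) - ‖(Real.sqrt 2 / (a - c)) • u‖ ^ 2 / 4
        - (ε * Real.sqrt (-(a + c) * (a - c) - ‖u‖ ^ 2) / (a - c)) ^ 2 / 2) = c
    rw [hθ2, hl2]
    field_simp
    ring

end SphereGAux

/-- On `{(θ,λ) : λ ≠ 0}`, the map `G` takes values in `Sⁿ`, is a local
diffeomorphism at every point of its domain (onto an open subset of the sphere, with
smooth local inverse), and is injective on `{λ > 0}`. -/
theorem sphereG_localDiffeo (n : ℕ) (hn : 1 ≤ n) :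
    (∀ p : EuclideanSpace ℝ (Fin (n - 1)) × ℝ, p.2 ≠ 0 → onSphere (sphereG p)) ∧
    (∀ p : EuclideanSpace ℝ (Fin (n - 1)) × ℝ, p.2 ≠ 0 →
      ∃ U : Set (EuclideanSpace ℝ (Fin (n - 1)) × ℝ), IsOpen U ∧ p ∈ U ∧
        (∀ q ∈ U, q.2 ≠ 0) ∧ Set.InjOn sphereG U ∧ ContDiffOn ℝ (⊤ : ℕ∞) sphereG U ∧
        ∃ V : Set (ℝ × EuclideanSpace ℝ (Fin (n - 1)) × ℝ), IsOpen V ∧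
          sphereG '' U = V ∩ {q | onSphere q} ∧
          ∃ H : ℝ × EuclideanSpace ℝ (Fin (n - 1)) × ℝ →
              EuclideanSpace ℝ (Fin (n - 1)) × ℝ,
            ContDiffOn ℝ (⊤ : ℕ∞) H V ∧ ∀ q ∈ U, H (sphereG q) = q) ∧
    Set.InjOn sphereG {p : EuclideanSpace ℝ (Fin (n - 1)) × ℝ | 0 < p.2} := by
  classical
  refine ⟨fun p _ => SphereGAux.key_onSphere p, fun p hp => ?_, ?_⟩
  · rcases hp.lt_or_gt with hneg | hpos
    · -- p.2 < 0 : use ε = -1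
      have hsign : ∀ q : EuclideanSpace ℝ (Fin (n - 1)) × ℝ, q.2 < 0 →
          0 < (-1 : ℝ) * q.2 := fun q hq => by linarith
      refine ⟨{q | q.2 < 0}, isOpen_lt continuous_snd continuous_const, hneg,
        fun q hq => ne_of_lt hq, ?_, SphereGAux.sphereG_contDiff.contDiffOn,
        SphereGAux.sphereV (n - 1), SphereGAux.isOpen_sphereV, ?_,
        SphereGAux.sphereH (-1), SphereGAux.sphereH_contDiffOn _,
        fun q hq => SphereGAux.sphereH_sphereG (Or.inr rfl) q (hsign q hq)⟩
      · intro x hx y hy h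
        rw [← SphereGAux.sphereH_sphereG (Or.inr rfl) x (hsign x hx),
          ← SphereGAux.sphereH_sphereG (Or.inr rfl) y (hsign y hy), h]
      · ext q
        constructor
        · rintro ⟨p', hp', rfl⟩
          exact ⟨SphereGAux.sphereG_mem_V p' (ne_of_lt hp'), SphereGAux.key_onSphere p'⟩
        · rintro ⟨hqV, hqS⟩
          refine ⟨SphereGAux.sphereH (-1) q, ?_, SphereGAux.sphereG_sphereH (Or.inr rfl) q hqV hqS⟩
          show (-1 : ℝ) * Real.sqrt (-(q.1 + q.2.2) * (q.1 - q.2.2) - ‖q.2.1‖ ^ 2)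
              / (q.1 - q.2.2) < 0
          exact div_neg_of_neg_of_pos (by nlinarith [Real.sqrt_pos.2 hqV.2]) hqV.1
    · -- 0 < p.2 : use ε = 1
      have hsign : ∀ q : EuclideanSpace ℝ (Fin (n - 1)) × ℝ, 0 < q.2 →
          0 < (1 : ℝ) * q.2 := fun q hq => by linarith
      refine ⟨{q | 0 < q.2}, isOpen_lt continuous_const continuous_snd, hpos,
        fun q hq => ne_of_gt hq, ?_, SphereGAux.sphereG_contDiff.contDiffOn,
        SphereGAux.sphereV (n - 1), SphereGAux.isOpen_sphereV, ?_,
        SphereGAux.sphereH 1, SphereGAux.sphereH_contDiffOn _,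
        fun q hq => SphereGAux.sphereH_sphereG (Or.inl rfl) q (hsign q hq)⟩
      · intro x hx y hy h
        rw [← SphereGAux.sphereH_sphereG (Or.inl rfl) x (hsign x hx),
          ← SphereGAux.sphereH_sphereG (Or.inl rfl) y (hsign y hy), h]
      · ext q
        constructor
        · rintro ⟨p', hp', rfl⟩
          exact ⟨SphereGAux.sphereG_mem_V p' (ne_of_gt hp'), SphereGAux.key_onSphere p'⟩
        · rintro ⟨hqV, hqS⟩
          refine ⟨SphereGAux.sphereH 1 q, ?_, SphereGAux.sphereG_sphereH (Or.inl rfl) q hqV hqS⟩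
          show (0:ℝ) < (1 : ℝ) * Real.sqrt (-(q.1 + q.2.2) * (q.1 - q.2.2) - ‖q.2.1‖ ^ 2)
              / (q.1 - q.2.2)
          rw [one_mul]
          exact div_pos (Real.sqrt_pos.2 hqV.2) hqV.1
  · intro x hx y hy h
    rw [← SphereGAux.sphereH_sphereG (Or.inl rfl) x (by simpa using hx),
      ← SphereGAux.sphereH_sphereG (Or.inl rfl) y (by simpa using hy), h]
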